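/- arXiv:1808.02306 — 3 statements merged into one kernel-verified Lean document; each statement's English description precedes it below -/
import Mathlib

section
/- For n > 0, the function I⁻_n(t) = ∫₁^∞ √v · β^c_{1/2}(-4πnv) · e^{-4πtv} dv/v, defined for t > n, has a singularity of type n^{-1/2}·arcsin(√(n/t)) at t = n; that is, I⁻_n(t) - n^{-1/2}·arcsin(√(n/t)) extends real analytically across t = n. -/
/-!
Unfolding `β^c_{1/2}`, the integrand of `I⁻_n(t)` is `∫₀¹ u^{-1/2} v^{-1/2} e^{-4π(t-nu)v} du`.
Integrated over all of `v > 0` instead of `v > 1`, Fubini turns this into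
`∫₀¹ u^{-1/2} (2√(t-nu))⁻¹ du` (a Gamma integral in `v`), and `n^{-1/2} arcsin √(nu/t)` is a
primitive of the new integrand. Hence `I⁻_n(t) = n^{-1/2} arcsin √(n/t) - ∫₀¹ (…) dv`, and the
last integral is a Laplace transform in `t` of an integrable function on the bounded interval
`(0, 1]`, which is entire.
-/

open Real MeasureTheory

/-- `β^c_{1/2}(s) = ∫₀¹ e^{-st} t^{-1/2} dt`. -/
noncomputable def betaC (s : ℝ) : ℝ :=
  ∫ t in (0:ℝ)..1, Real.exp (-s * t) * t ^ (-(1:ℝ) / 2)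

/-- `I⁻_n(t) = ∫₁^∞ √v β^c_{1/2}(-4πnv) e^{-4πtv} dv/v`. -/
noncomputable def Iminus (n t : ℝ) : ℝ :=
  ∫ v in Set.Ioi (1:ℝ), Real.sqrt v * betaC (-4 * π * n * v) * Real.exp (-4 * π * t * v) / v

open Set

theorem differentiable_integral_mul_cexp_neg_mul {μ : Measure ℝ} {h : ℝ → ℂ}
    (hh : Integrable h μ) {R : ℝ} (hR : ∀ᵐ v ∂μ, |v| ≤ R) :
    Differentiable ℂ (fun z : ℂ => ∫ v, h v * Complex.exp (-(v * z)) ∂μ) := by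
  intro z₀
  set C := rexp (R * (‖z₀‖ + 1))
  have hmeas (z : ℂ) : AEStronglyMeasurable (fun v : ℝ => Complex.exp (-(v * z))) μ :=
    (by fun_prop : Continuous fun v : ℝ => Complex.exp (-(v * z))).aestronglyMeasurable
  have hexp_le {v : ℝ} (hv : |v| ≤ R) {z : ℂ} (hz : z ∈ Metric.ball z₀ 1) :
      ‖Complex.exp (-(v * z))‖ ≤ C := by
    have hz' : ‖z‖ ≤ ‖z₀‖ + 1 := by
      have := norm_le_norm_add_norm_sub' z z₀
      rw [mem_ball_iff_norm] at hz
      linarith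
    refine (Complex.norm_exp_le_exp_norm _).trans (Real.exp_le_exp.2 ?_)
    rw [norm_neg, norm_mul, Complex.norm_real, Real.norm_eq_abs]
    exact mul_le_mul hv hz' (norm_nonneg _) ((abs_nonneg v).trans hv)
  have hderiv_le : ∀ᵐ v ∂μ, ∀ z ∈ Metric.ball z₀ 1,
      ‖h v * (Complex.exp (-(v * z)) * -v)‖ ≤ ‖h v‖ * (C * R) := by
    filter_upwards [hR] with v hv z hz
    rw [norm_mul, norm_mul, norm_neg, Complex.norm_real, Real.norm_eq_abs]
    exact mul_le_mul_of_nonneg_left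
      (mul_le_mul (hexp_le hv hz) hv (abs_nonneg v) (Real.exp_nonneg _)) (norm_nonneg _)
  have hint : Integrable (fun v => h v * Complex.exp (-(v * z₀))) μ := by
    refine (hh.norm.mul_const C).mono' (hh.aestronglyMeasurable.mul (hmeas z₀)) ?_
    filter_upwards [hR] with v hv
    rw [norm_mul]
    exact mul_le_mul_of_nonneg_left (hexp_le hv (Metric.mem_ball_self one_pos)) (norm_nonneg _)
  refine (hasDerivAt_integral_of_dominated_loc_of_deriv_le (Metric.ball_mem_nhds z₀ one_pos)
    (.of_forall fun z => hh.aestronglyMeasurable.mul (hmeas z)) hint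
    (hh.aestronglyMeasurable.mul ((hmeas z₀).mul (by fun_prop))) hderiv_le
    (hh.norm.mul_const _) (.of_forall fun v z _ => ?_)).2.differentiableAt
  exact (((hasDerivAt_id z).const_mul (v : ℂ)).neg.cexp.const_mul (h v)).congr_deriv
    (by simp only [Pi.neg_apply, id]; ring)

theorem analyticOnNhd_integral_mul_exp_neg_mul {μ : Measure ℝ} {h : ℝ → ℝ}
    (hh : Integrable h μ) {R : ℝ} (hR : ∀ᵐ v ∂μ, |v| ≤ R) :
    AnalyticOnNhd ℝ (fun x : ℝ => ∫ v, h v * rexp (-(v * x)) ∂μ) univ := by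
  have hF : AnalyticOnNhd ℂ (fun z : ℂ => ∫ v, (h v : ℂ) * Complex.exp (-(v * z)) ∂μ)
      (Complex.ofReal '' univ) :=
    fun z _ => (differentiable_integral_mul_cexp_neg_mul hh.ofReal hR).analyticAt z
  convert hF.re_ofReal using 2 with x
  have hreal (v : ℝ) :
      (h v : ℂ) * Complex.exp (-(v * x)) = ((h v * rexp (-(v * x)) : ℝ) : ℂ) := by
    push_cast; rfl
  simp only [hreal]
  rw [integral_complex_ofReal, Complex.ofReal_re]

theorem rpow_neg_half_eq_inv_sqrt {x : ℝ} (hx : 0 ≤ x) : x ^ (-(1:ℝ) / 2) = (√x)⁻¹ := by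
  rw [show -(1:ℝ) / 2 = -(1 / 2) by norm_num, rpow_neg hx, sqrt_eq_rpow]

theorem integrableOn_rpow_neg_half_mul_exp_neg_mul {r : ℝ} (hr : 0 < r) :
    IntegrableOn (fun v : ℝ => v ^ (-(1:ℝ) / 2) * rexp (-(r * v))) (Ioi 0) := by
  simpa using integrableOn_rpow_mul_exp_neg_mul_rpow (by norm_num : (-1:ℝ) < -1 / 2) one_pos hr

theorem integral_rpow_neg_half_mul_exp_neg_mul {r : ℝ} (hr : 0 < r) :
    ∫ v in Ioi 0, v ^ (-(1:ℝ) / 2) * rexp (-(r * v)) = √(π / r) := by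
  have h := integral_rpow_mul_exp_neg_mul_Ioi (a := 1 / 2) one_half_pos hr
  rw [show (1 / 2 : ℝ) - 1 = -1 / 2 by norm_num, Gamma_one_half_eq, ← sqrt_eq_rpow] at h
  rw [h, ← sqrt_mul' _ pi_pos.le, one_div_mul_eq_div]

theorem hasDerivAt_rpow_neg_half_mul_arcsin_sqrt {n t u : ℝ} (hn : 0 < n) (hu : 0 < u)
    (hut : n * u < t) :
    HasDerivAt (fun u => n ^ (-(1:ℝ) / 2) * arcsin √(n * u / t))
      (u ^ (-(1:ℝ) / 2) / (2 * √(t - n * u))) u := by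
  have ht : 0 < t := (mul_pos hn hu).trans hut
  have hx : 0 < n * u / t := by positivity
  have hx1 : n * u / t < 1 := (div_lt_one ht).2 hut
  have hsqrt : HasDerivAt (fun u => √(n * u / t)) (n / t / (2 * √(n * u / t))) u := by
    simpa using (((hasDerivAt_id u).const_mul n).div_const t).sqrt hx.ne'
  have harcsin := (hasDerivAt_arcsin (x := √(n * u / t)) (by linarith [sqrt_nonneg (n * u / t)])
    ((sqrt_lt' one_pos).2 (by simpa using hx1)).ne).comp u hsqrt
  refine (harcsin.const_mul _).congr_deriv ?_
  have h1 : 1 - n * u / t = (t - n * u) / t := by field_simp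
  rw [sq_sqrt hx.le, rpow_neg_half_eq_inv_sqrt hn.le, rpow_neg_half_eq_inv_sqrt hu.le, h1,
    sqrt_div' _ ht.le, sqrt_div' _ ht.le, sqrt_mul' _ hu.le]
  have : 0 < √(t - n * u) := sqrt_pos.2 (by linarith)
  have : 0 < √u := sqrt_pos.2 hu
  have : 0 < √n := sqrt_pos.2 hn
  have : 0 < √t := sqrt_pos.2 ht
  field_simp
  rw [sq_sqrt hn.le, sq_sqrt ht.le]

section ArcsinIntegral

variable {n t : ℝ} (hn : 0 < n) (hnt : n < t)
include hn hnt

theorem integrableOn_rpow_neg_half_div_sqrt :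
    IntegrableOn (fun u : ℝ => u ^ (-(1:ℝ) / 2) / (2 * √(t - n * u))) (Ioc 0 1) :=
  intervalIntegral.integrableOn_deriv_of_nonneg (by fun_prop)
    (fun _ hu => hasDerivAt_rpow_neg_half_mul_arcsin_sqrt hn hu.1 (by nlinarith [hu.2]))
    (fun u hu => by have := hu.1; positivity)

theorem integral_rpow_neg_half_div_sqrt :
    ∫ u in Ioc 0 1, u ^ (-(1:ℝ) / 2) / (2 * √(t - n * u)) =
      n ^ (-(1:ℝ) / 2) * arcsin √(n / t) := by
  rw [← intervalIntegral.integral_of_le zero_le_one,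
    intervalIntegral.integral_eq_sub_of_hasDerivAt_of_le zero_le_one (by fun_prop)
      (fun _ hu => hasDerivAt_rpow_neg_half_mul_arcsin_sqrt hn hu.1 (by nlinarith [hu.2]))
      ((intervalIntegrable_iff_integrableOn_Ioc_of_le zero_le_one).2
        (integrableOn_rpow_neg_half_div_sqrt hn hnt))]
  simp

end ArcsinIntegral

namespace Iminus

noncomputable def integrand (n t v : ℝ) : ℝ :=
  √v * betaC (-4 * π * n * v) * rexp (-4 * π * t * v) / v

noncomputable def kernel (n t : ℝ) (p : ℝ × ℝ) : ℝ :=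
  p.1 ^ (-(1:ℝ) / 2) * (p.2 ^ (-(1:ℝ) / 2) * rexp (-(4 * π * (t - n * p.1) * p.2)))

theorem integrand_eq_mul_exp (n t s v : ℝ) :
    integrand n t v = integrand n s v * rexp (-(v * (4 * π * (t - s)))) := by
  simp only [integrand, div_mul_eq_mul_div, mul_assoc, ← Real.exp_add]
  ring_nf

theorem integral_Ioc_kernel (n t : ℝ) {v : ℝ} (hv : 0 < v) :
    ∫ u in Ioc 0 1, kernel n t (u, v) = integrand n t v := by
  have hexp (u : ℝ) : rexp (-(4 * π * (t - n * u) * v)) =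
      rexp (-(-4 * π * n * v) * u) * rexp (-4 * π * t * v) := by
    rw [← Real.exp_add]; ring_nf
  have hv' : v ^ (-(1:ℝ) / 2) = √v / v := by
    rw [rpow_neg_half_eq_inv_sqrt hv.le, eq_div_iff hv.ne', inv_mul_eq_div,
      div_eq_iff (sqrt_pos.2 hv).ne', mul_self_sqrt hv.le]
  have hβ : integrand n t v = ∫ u in Ioc 0 1,
      √v / v * rexp (-4 * π * t * v) * (rexp (-(-4 * π * n * v) * u) * u ^ (-(1:ℝ) / 2)) := by
    rw [integral_const_mul, integrand, betaC, intervalIntegral.integral_of_le zero_le_one]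
    ring
  rw [hβ]
  refine setIntegral_congr_fun measurableSet_Ioc fun u _ => ?_
  rw [kernel, hexp, hv']
  ring

section Fubini

variable {n t : ℝ} (hn : 0 < n) (hnt : n < t)
include hn hnt

theorem integral_Ioi_kernel {u : ℝ} (hu : u ∈ Ioc (0:ℝ) 1) :
    ∫ v in Ioi 0, kernel n t (u, v) = u ^ (-(1:ℝ) / 2) / (2 * √(t - n * u)) := by
  have hr : 0 < t - n * u := by nlinarith [hu.2]
  have hπ : π / (4 * π * (t - n * u)) = (2 * √(t - n * u))⁻¹ ^ 2 := by
    rw [inv_pow, mul_pow, sq_sqrt hr.le]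
    field_simp
    ring
  simp only [kernel]
  rw [integral_const_mul, integral_rpow_neg_half_mul_exp_neg_mul (by positivity), hπ,
    sqrt_sq (by positivity), ← div_eq_mul_inv]

theorem integrable_kernel :
    Integrable (kernel n t) ((volume.restrict (Ioc 0 1)).prod (volume.restrict (Ioi 0))) := by
  have hmeas : Measurable (kernel n t) := by unfold kernel; fun_prop
  refine (integrable_prod_iff hmeas.aestronglyMeasurable).2 ⟨?_, ?_⟩
  · filter_upwards [ae_restrict_mem measurableSet_Ioc] with u hu
    have hr : 0 < t - n * u := by nlinarith [hu.2]
    exact (integrableOn_rpow_neg_half_mul_exp_neg_mul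
      (by positivity : 0 < 4 * π * (t - n * u))).const_mul (u ^ (-(1:ℝ) / 2))
  · refine (integrableOn_rpow_neg_half_div_sqrt hn hnt).congr ?_
    filter_upwards [ae_restrict_mem measurableSet_Ioc] with u hu
    rw [← integral_Ioi_kernel hn hnt hu]
    refine setIntegral_congr_fun measurableSet_Ioi fun v hv => ?_
    have := hu.1
    have : 0 < v := hv
    rw [norm_of_nonneg (by unfold kernel; positivity)]

theorem integrableOn_Ioi_integrand : IntegrableOn (integrand n t) (Ioi 0) :=
  (integrable_kernel hn hnt).integral_prod_right.congr <| by
    filter_upwards [ae_restrict_mem measurableSet_Ioi] with v hv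
    exact integral_Ioc_kernel n t hv

theorem integral_Ioi_integrand :
    ∫ v in Ioi 0, integrand n t v = n ^ (-(1:ℝ) / 2) * arcsin √(n / t) := by
  calc ∫ v in Ioi 0, integrand n t v
      = ∫ v in Ioi 0, ∫ u in Ioc 0 1, kernel n t (u, v) :=
        setIntegral_congr_fun measurableSet_Ioi fun v hv => (integral_Ioc_kernel n t hv).symm
    _ = ∫ u in Ioc 0 1, ∫ v in Ioi 0, kernel n t (u, v) :=
        (integral_integral_swap (f := fun u v => kernel n t (u, v))
          (integrable_kernel hn hnt)).symm
    _ = ∫ u in Ioc 0 1, u ^ (-(1:ℝ) / 2) / (2 * √(t - n * u)) :=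
        setIntegral_congr_fun measurableSet_Ioc fun u hu => integral_Ioi_kernel hn hnt hu
    _ = n ^ (-(1:ℝ) / 2) * arcsin √(n / t) := integral_rpow_neg_half_div_sqrt hn hnt

theorem eq_sub_integral_Ioc :
    Iminus n t = n ^ (-(1:ℝ) / 2) * arcsin √(n / t) - ∫ v in Ioc 0 1, integrand n t v := by
  have hI := integrableOn_Ioi_integrand hn hnt
  rw [← Ioc_union_Ioi_eq_Ioi zero_le_one] at hI
  rw [← integral_Ioi_integrand hn hnt, ← Ioc_union_Ioi_eq_Ioi zero_le_one,
    setIntegral_union (Ioc_disjoint_Ioi le_rfl) measurableSet_Ioi hI.left_of_union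
      hI.right_of_union]
  unfold Iminus integrand
  ring

end Fubini

end Iminus

/-- For `n > 0`, `I⁻_n` has a singularity of type `n^{-1/2} arcsin(√(n/t))` at `t = n`. -/
theorem Iminus_arcsin_singularity (n : ℝ) (hn : 0 < n) :
    ∃ ε > (0:ℝ), ∃ g : ℝ → ℝ, AnalyticOnNhd ℝ g (Metric.ball n ε) ∧
      ∀ t ∈ Set.Ioo n (n + ε),
        Iminus n t - n ^ (-(1:ℝ) / 2) * Real.arcsin (Real.sqrt (n / t)) = g t := by
  have hh : IntegrableOn (Iminus.integrand n (n + 1)) (Ioc 0 1) :=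
    (Iminus.integrableOn_Ioi_integrand hn (lt_add_one n)).mono_set Ioc_subset_Ioi_self
  have hR : ∀ᵐ v ∂volume.restrict (Ioc (0:ℝ) 1), |v| ≤ 1 := by
    filter_upwards [ae_restrict_mem measurableSet_Ioc] with v hv
    exact (abs_of_pos hv.1).trans_le hv.2
  have hL := analyticOnNhd_integral_mul_exp_neg_mul hh hR
  refine ⟨1, one_pos, fun t => -∫ v in Ioc 0 1,
    Iminus.integrand n (n + 1) v * rexp (-(v * (4 * π * (t - (n + 1))))), ?_, fun t ht => ?_⟩
  · exact (hL.comp (fun _ _ => by fun_prop) (mapsTo_univ _ _)).neg.mono (subset_univ _)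
  · rw [Iminus.eq_sub_integral_Ioc hn ht.1]
    simp only [Iminus.integrand_eq_mul_exp n t (n + 1)]
    ring
end

section
/- For Re(s) > 0 and y > 0, the n = 0 Fourier coefficient of the 1-periodic function x ↦ Σ_{ℓ∈ℤ} arcsin_s(y/√((x+ℓ)²+y²)) is ∫_{-∞}^{∞} arcsin_s(1/√((u/y)²+1)) du = y·√π·Γ(s)/Γ(s+1/2). -/
open Real MeasureTheory

/-- `arcsin_s(1/√a) = ∫₀¹ (1/√(a-t²)) ((1-t²)/(a-t²))^s dt`. -/
noncomputable def arcsinS (s : ℂ) (a : ℝ) : ℂ :=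
  ∫ t in (0:ℝ)..1,
    ((1 / Real.sqrt (a - t ^ 2) : ℝ) : ℂ) * (((1 - t ^ 2) / (a - t ^ 2) : ℝ) : ℂ) ^ s

/-!
Put `g w = (w² + 1)^(-s-1/2)` and `c t = y √(1 - t²)`. The factorisation
`(u/y)² + 1 - t² = (1 - t²) ((u / c t)² + 1)` turns the defining integral into
`arcsin_s(y/√(u²+y²)) = y ∫₀¹ (c t)⁻¹ g(u / c t) dt`, an average of `L¹`-normalised dilates of `g`.
By Fubini its integral over `u` is `y ∫ g`, and the substitution `x = w²/(w²+1)` identifies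
`∫ g` with `B(1/2, s) = √π Γ(s)/Γ(s+1/2)`. Integrability in `u` also lets the sum over the
translates `x + ℓ` be folded into the integral over `ℝ`, which gives the Fourier coefficient.
-/

open Set Filter

theorem MeasureTheory.Integrable.intervalIntegral_tsum_comp_add_int {E : Type*}
    [NormedAddCommGroup E] [NormedSpace ℝ E] {f : ℝ → E} (hf : Integrable f) :
    ∫ x in (0:ℝ)..1, ∑' ℓ : ℤ, f (x + ℓ) = ∫ x, f x := by
  have hsum : Summable fun ℓ : ℤ ↦ ∫ x in Ioc (0:ℝ) 1, ‖f (x + ℓ)‖ := by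
    simpa only [intervalIntegral.integral_of_le zero_le_one]
      using hf.norm.hasSum_intervalIntegral_comp_add_int.summable
  rw [intervalIntegral.integral_of_le zero_le_one, ← integral_tsum_of_summable_integral_norm
    (fun ℓ : ℤ ↦ (hf.comp_add_right (ℓ:ℝ)).integrableOn) hsum]
  simpa only [intervalIntegral.integral_of_le zero_le_one]
    using hf.hasSum_intervalIntegral_comp_add_int.tsum_eq

section Dilation

variable {E : Type*} [NormedAddCommGroup E] [NormedSpace ℝ E]

theorem integral_inv_smul_comp_div (g : ℝ → E) {c : ℝ} (hc : 0 < c) :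
    ∫ u, c⁻¹ • g (u / c) = ∫ w, g w := by
  rw [integral_smul, Measure.integral_comp_div, abs_of_pos hc, inv_smul_smul₀ hc.ne']

variable {g : ℝ → E} {c : ℝ → ℝ} {μ : Measure ℝ}

theorem integrable_prod_inv_smul_comp_div [IsFiniteMeasure μ] (hg : Integrable g)
    (hgm : StronglyMeasurable g) (hc : Measurable c) (hc_pos : ∀ᵐ t ∂μ, 0 < c t) :
    Integrable (fun p : ℝ × ℝ ↦ (c p.2)⁻¹ • g (p.1 / c p.2)) (volume.prod μ) := by
  have hmeas : StronglyMeasurable fun p : ℝ × ℝ ↦ (c p.2)⁻¹ • g (p.1 / c p.2) :=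
    ((hc.comp measurable_snd).inv.stronglyMeasurable).smul
      (hgm.comp_measurable (measurable_fst.div (hc.comp measurable_snd)))
  refine (integrable_prod_iff' hmeas.aestronglyMeasurable).2 ⟨?_, ?_⟩
  · filter_upwards [hc_pos] with t ht
    exact (hg.comp_div ht.ne').smul _
  · refine (integrable_const (∫ w, ‖g w‖)).congr ?_
    filter_upwards [hc_pos] with t ht
    simp only [norm_smul, norm_inv, Real.norm_of_nonneg ht.le, ← smul_eq_mul (a := (c t)⁻¹)]
    exact (integral_inv_smul_comp_div (fun w ↦ ‖g w‖) ht).symm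

theorem integral_integral_inv_smul_comp_div [CompleteSpace E] [IsFiniteMeasure μ]
    (hg : Integrable g) (hgm : StronglyMeasurable g) (hc : Measurable c)
    (hc_pos : ∀ᵐ t ∂μ, 0 < c t) :
    ∫ u, ∫ t, (c t)⁻¹ • g (u / c t) ∂μ = μ.real univ • ∫ w, g w := by
  rw [integral_integral_swap (integrable_prod_inv_smul_comp_div hg hgm hc hc_pos),
    ← integral_const]
  exact integral_congr_ae (hc_pos.mono fun t ht ↦ integral_inv_smul_comp_div g ht)

end Dilation

theorem integral_eq_two_smul_integral_Ioi_of_even {E : Type*} [NormedAddCommGroup E]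
    [NormedSpace ℝ E] {f : ℝ → E} (hf : Integrable f) (heven : ∀ x, f (-x) = f x) :
    ∫ x, f x = (2:ℝ) • ∫ x in Ioi 0, f x := by
  rw [← intervalIntegral.integral_Iic_add_Ioi hf.integrableOn hf.integrableOn, two_smul,
    ← neg_zero, ← integral_comp_neg_Ioi, neg_zero]
  simp only [heven]

theorem hasDerivAt_sq_div_sq_add_one (u : ℝ) :
    HasDerivAt (fun u : ℝ ↦ u ^ 2 / (u ^ 2 + 1)) (2 * u / (u ^ 2 + 1) ^ 2) u := by
  refine ((hasDerivAt_pow 2 u).div ((hasDerivAt_pow 2 u).add_const 1)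
    (by positivity)).congr_deriv ?_
  push_cast
  ring

theorem injOn_sq_div_sq_add_one : InjOn (fun u : ℝ ↦ u ^ 2 / (u ^ 2 + 1)) (Ioi 0) := by
  intro a (ha : 0 < a) b (hb : 0 < b) hab
  have : a ^ 2 = b ^ 2 := by
    field_simp at hab
    linarith
  exact (pow_left_inj₀ ha.le hb.le two_ne_zero).1 this

theorem image_sq_div_sq_add_one_Ioi : (fun u : ℝ ↦ u ^ 2 / (u ^ 2 + 1)) '' Ioi 0 = Ioo 0 1 := by
  ext x
  constructor
  · rintro ⟨u, hu : 0 < u, rfl⟩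
    exact ⟨by positivity, (div_lt_one (by positivity)).2 (lt_add_one _)⟩
  · rintro ⟨hx0, hx1⟩
    have hx : 0 ≤ x / (1 - x) := div_nonneg hx0.le (by linarith)
    refine ⟨√(x / (1 - x)), Real.sqrt_pos.2 (div_pos hx0 (by linarith)), ?_⟩
    have : 1 - x ≠ 0 := by linarith
    simp only [Real.sq_sqrt hx]
    field_simp
    ring

theorem rpow_sq_div_neg_one_half {u X : ℝ} (hu : 0 < u) (hX : 0 < X) :
    (u ^ 2 / X) ^ (-(1 / 2) : ℝ) = √X / u := by
  rw [Real.rpow_neg (by positivity), ← Real.sqrt_eq_rpow, Real.sqrt_div' _ hX.le,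
    Real.sqrt_sq hu.le, inv_div]

theorem abs_deriv_smul_betaIntegrand_sq_div_sq_add_one (s : ℂ) {u : ℝ} (hu : 0 < u) :
    |2 * u / (u ^ 2 + 1) ^ 2| • (((u ^ 2 / (u ^ 2 + 1) : ℝ) : ℂ) ^ ((1 / 2 : ℂ) - 1)
      * (1 - ((u ^ 2 / (u ^ 2 + 1) : ℝ) : ℂ)) ^ (s - 1))
      = 2 * ((u ^ 2 + 1 : ℝ) : ℂ) ^ (-s - 1 / 2) := by
  set X : ℝ := u ^ 2 + 1
  have hX : 0 < X := by positivity
  have hX' : (X : ℂ) ≠ 0 := by exact_mod_cast hX.ne'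
  have h_one_sub : 1 - ((u ^ 2 / X : ℝ) : ℂ) = (X : ℂ)⁻¹ := by
    push_cast
    field_simp
    simp [X]
  have h_pow : ((u ^ 2 / X : ℝ) : ℂ) ^ ((1 / 2 : ℂ) - 1) = ((√X / u : ℝ) : ℂ) := by
    rw [← rpow_sq_div_neg_one_half hu hX, Complex.ofReal_cpow (by positivity)]
    norm_num
  have h_sqrt : ((√X : ℝ) : ℂ) = (X : ℂ) ^ (1 / 2 : ℂ) := by
    rw [Real.sqrt_eq_rpow, Complex.ofReal_cpow hX.le]
    norm_num
  rw [h_one_sub, h_pow, Complex.inv_cpow_ofReal_nonneg hX.le, ← Complex.cpow_neg,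
    abs_of_pos (by positivity), Complex.real_smul]
  push_cast
  rw [h_sqrt, show -s - 1 / 2 = (1 / 2 + -(s - 1)) - (2 : ℕ) by push_cast; ring,
    Complex.cpow_sub _ _ hX', Complex.cpow_add _ _ hX', Complex.cpow_natCast]
  have hu' : (u : ℂ) ≠ 0 := by exact_mod_cast hu.ne'
  field_simp

theorem betaIntegral_one_half_left (s : ℂ) :
    Complex.betaIntegral (1 / 2) s
      = 2 * ∫ u in Ioi (0 : ℝ), ((u ^ 2 + 1 : ℝ) : ℂ) ^ (-s - 1 / 2) := by
  have hcv := integral_image_eq_integral_abs_deriv_smul measurableSet_Ioi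
    (fun u _ ↦ (hasDerivAt_sq_div_sq_add_one u).hasDerivWithinAt) injOn_sq_div_sq_add_one
    (fun x : ℝ ↦ (x : ℂ) ^ ((1 / 2 : ℂ) - 1) * (1 - (x : ℂ)) ^ (s - 1))
  rw [image_sq_div_sq_add_one_Ioi] at hcv
  rw [Complex.betaIntegral, intervalIntegral.integral_of_le zero_le_one,
    integral_Ioc_eq_integral_Ioo, hcv, ← integral_const_mul]
  exact setIntegral_congr_fun measurableSet_Ioi fun u hu ↦
    abs_deriv_smul_betaIntegrand_sq_div_sq_add_one s hu

theorem continuous_ofReal_sq_add_one_cpow (z : ℂ) :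
    Continuous fun w : ℝ ↦ ((w ^ 2 + 1 : ℝ) : ℂ) ^ z :=
  (Complex.continuous_ofReal.comp (by fun_prop)).cpow continuous_const
    fun w ↦ Complex.ofReal_mem_slitPlane.2 (by positivity)

theorem integrable_ofReal_sq_add_one_cpow {z : ℂ} (hz : z.re < -(1 / 2)) :
    Integrable fun w : ℝ ↦ ((w ^ 2 + 1 : ℝ) : ℂ) ^ z := by
  have h := integrable_rpow_neg_one_add_norm_sq (E := ℝ) (μ := volume) (r := -2 * z.re)
    (by rw [Module.finrank_self]; push_cast; linarith)
  refine h.mono' (continuous_ofReal_sq_add_one_cpow z).aestronglyMeasurable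
    (Eventually.of_forall fun w ↦ ?_)
  rw [Complex.norm_cpow_eq_rpow_re_of_pos (by positivity), Real.norm_eq_abs, sq_abs, add_comm]
  ring_nf
  exact le_rfl

theorem integral_ofReal_sq_add_one_cpow {s : ℂ} (hs : 0 < s.re) :
    ∫ w : ℝ, ((w ^ 2 + 1 : ℝ) : ℂ) ^ (-s - 1 / 2)
      = √π * Complex.Gamma s / Complex.Gamma (s + 1 / 2) := by
  have hint : Integrable fun w : ℝ ↦ ((w ^ 2 + 1 : ℝ) : ℂ) ^ (-s - 1 / 2) :=
    integrable_ofReal_sq_add_one_cpow (by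
      simp only [Complex.sub_re, Complex.neg_re, Complex.div_ofNat_re, Complex.one_re]; linarith)
  rw [integral_eq_two_smul_integral_Ioi_of_even hint (fun w ↦ by simp only [neg_sq]),
    ofNat_smul_eq_nsmul, nsmul_eq_mul, Nat.cast_ofNat, ← betaIntegral_one_half_left,
    Complex.betaIntegral_eq_Gamma_mul_div _ _ (by norm_num) hs, Complex.Gamma_one_half_eq,
    add_comm, Real.sqrt_eq_rpow, Complex.ofReal_cpow pi_pos.le]
  norm_num

theorem ofReal_one_div_sqrt_eq_cpow {X : ℝ} (hX : 0 ≤ X) :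
    ((1 / √X : ℝ) : ℂ) = (X : ℂ) ^ (-(1 / 2) : ℂ) := by
  rw [Real.sqrt_eq_rpow, one_div, ← Real.rpow_neg hX, Complex.ofReal_cpow hX]
  norm_num

theorem one_div_sqrt_mul_cpow_div_mul (s : ℂ) {a X : ℝ} (ha : 0 < a) (hX : 0 < X) :
    ((1 / √(a * X) : ℝ) : ℂ) * ((a / (a * X) : ℝ) : ℂ) ^ s
      = ((1 / √a : ℝ) : ℂ) * (X : ℂ) ^ (-s - 1 / 2) := by
  have hX' : (X : ℂ) ≠ 0 := by exact_mod_cast hX.ne'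
  rw [Real.sqrt_mul ha.le, div_mul_cancel_left₀ ha.ne', ← one_div_mul_one_div,
    Complex.ofReal_mul, ofReal_one_div_sqrt_eq_cpow hX.le, Complex.ofReal_inv,
    Complex.inv_cpow_ofReal_nonneg hX.le, ← Complex.cpow_neg, mul_assoc,
    ← Complex.cpow_add _ _ hX']
  ring_nf

theorem arcsinS_integrand_eq_smul_inv_smul (s : ℂ) {y t : ℝ} (hy : 0 < y) (ht : t ∈ Ioo 0 1)
    (u : ℝ) :
    ((1 / √((u / y) ^ 2 + 1 - t ^ 2) : ℝ) : ℂ)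
        * (((1 - t ^ 2) / ((u / y) ^ 2 + 1 - t ^ 2) : ℝ) : ℂ) ^ s
      = y • (y * √(1 - t ^ 2))⁻¹
          • (((u / (y * √(1 - t ^ 2))) ^ 2 + 1 : ℝ) : ℂ) ^ (-s - 1 / 2) := by
  have ha : 0 < 1 - t ^ 2 := by nlinarith [ht.1, ht.2]
  have hsplit :
      (u / y) ^ 2 + 1 - t ^ 2 = (1 - t ^ 2) * ((u / (y * √(1 - t ^ 2))) ^ 2 + 1) := by
    rw [div_pow, div_pow, mul_pow, Real.sq_sqrt ha.le]
    field_simp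
    ring
  rw [hsplit, one_div_sqrt_mul_cpow_div_mul s ha (by positivity), ← smul_assoc, smul_eq_mul,
    Complex.real_smul, mul_inv, ← mul_assoc, mul_inv_cancel₀ hy.ne', one_mul, one_div]

theorem arcsinS_sq_div_add_one (s : ℂ) {y : ℝ} (hy : 0 < y) (u : ℝ) :
    arcsinS s ((u / y) ^ 2 + 1) = y • ∫ t in Ioo (0 : ℝ) 1,
      (y * √(1 - t ^ 2))⁻¹ • (((u / (y * √(1 - t ^ 2))) ^ 2 + 1 : ℝ) : ℂ) ^ (-s - 1 / 2) := by
  rw [arcsinS, intervalIntegral.integral_of_le zero_le_one, integral_Ioc_eq_integral_Ioo,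
    ← integral_smul]
  exact setIntegral_congr_fun measurableSet_Ioo fun t ht ↦
    arcsinS_integrand_eq_smul_inv_smul s hy ht u

/-- The `n = 0` Fourier coefficient of `x ↦ Σ_{ℓ∈ℤ} arcsin_s(y/√((x+ℓ)²+y²))` is
`∫_{-∞}^∞ arcsin_s(1/√((u/y)²+1)) du = y √π Γ(s)/Γ(s+1/2)`. -/
theorem arcsinS_zeroth_fourier_coefficient (s : ℂ) (hs : 0 < s.re) (y : ℝ) (hy : 0 < y) :
    (∫ x in (0:ℝ)..1, ∑' ℓ : ℤ, arcsinS s ((((x + ℓ) ^ 2 + y ^ 2) / y ^ 2 : ℝ))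
        = ∫ u : ℝ, arcsinS s (((u / y) ^ 2 + 1 : ℝ)))
    ∧ ∫ u : ℝ, arcsinS s (((u / y) ^ 2 + 1 : ℝ))
        = (y : ℂ) * (Real.sqrt π : ℂ) * Complex.Gamma s / Complex.Gamma (s + 1 / 2) := by
  set g : ℝ → ℂ := fun w ↦ ((w ^ 2 + 1 : ℝ) : ℂ) ^ (-s - 1 / 2)
  set c : ℝ → ℝ := fun t ↦ y * √(1 - t ^ 2)
  have hg : Integrable g := integrable_ofReal_sq_add_one_cpow (by
    simp only [Complex.sub_re, Complex.neg_re, Complex.div_ofNat_re, Complex.one_re]; linarith)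
  have hgm : StronglyMeasurable g := (continuous_ofReal_sq_add_one_cpow _).stronglyMeasurable
  have hc : Measurable c := by fun_prop
  have hc_pos : ∀ᵐ t ∂volume.restrict (Ioo (0 : ℝ) 1), 0 < c t := by
    filter_upwards [ae_restrict_mem measurableSet_Ioo] with t ht
    exact mul_pos hy (Real.sqrt_pos.2 (by nlinarith [ht.1, ht.2]))
  have h_int : Integrable fun u ↦ arcsinS s ((u / y) ^ 2 + 1) := by
    simp_rw [arcsinS_sq_div_add_one s hy]
    exact (integrable_prod_inv_smul_comp_div hg hgm hc hc_pos).integral_prod_left.smul y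
  have h_val : ∫ u, arcsinS s ((u / y) ^ 2 + 1)
      = (y : ℂ) * √π * Complex.Gamma s / Complex.Gamma (s + 1 / 2) := by
    simp_rw [arcsinS_sq_div_add_one s hy]
    rw [integral_smul, integral_integral_inv_smul_comp_div hg hgm hc hc_pos,
      measureReal_restrict_apply_univ, Real.volume_real_Ioo_of_le zero_le_one, sub_zero,
      one_smul, integral_ofReal_sq_add_one_cpow hs, Complex.real_smul]
    ring
  refine ⟨?_, h_val⟩
  have h_arg : ∀ v : ℝ, (v ^ 2 + y ^ 2) / y ^ 2 = (v / y) ^ 2 + 1 := fun v ↦ by field_simp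
  simp_rw [h_arg]
  exact h_int.intervalIntegral_tsum_comp_add_int
end

section
/- Let D > 0 be a non-square discriminant and C > 0. For any compact subset K of the upper half-plane, the set of binary quadratic forms Q = [a,b,c] of discriminant D such that there exists z = x+iy ∈ K with |a|z|² + bx + c|/y ≤ C is finite. -/
open Complex

/-!
Write `w = (a|z|² + bx + c)/y`, `v = 2ax + b` and `s = 2ay - w`. Then `v² + s² = D + w²`: in these
coordinates the discriminant is `v² + s² - w²`, and `w` is the projection onto the positive line
attached to `z`. So `|w| ≤ C` confines `(v, s, w)` to a compact box depending
only on `D` and `C`. The coefficients `(a, b, c)` are recovered from `(v, s, w)` by a map that is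
continuous in `z` on the upper half-plane, so for `z ∈ K` they range over a compact subset
of `ℝ³`, which contains only finitely many integer points.
-/

section

variable (q : ℝ × ℝ × ℝ) (z : ℂ)

/-- `q = (a, b, c)` stands for the form `[a, b, c]`. -/
noncomputable def posProj : ℝ := (q.1 * normSq z + q.2.1 * z.re + q.2.2) / z.im

noncomputable def formCoords : ℝ × ℝ × ℝ :=
  (2 * q.1 * z.re + q.2.1, 2 * q.1 * z.im - posProj q z, posProj q z)

noncomputable def formOfCoords (p : ℝ × ℝ × ℝ) : ℝ × ℝ × ℝ :=
  let a := (p.2.1 + p.2.2) / (2 * z.im)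
  let b := p.1 - 2 * a * z.re
  (a, b, p.2.2 * z.im - a * normSq z - b * z.re)

variable {q z}

theorem formCoords_sq_add_sq (hz : z.im ≠ 0) :
    (formCoords q z).1 ^ 2 + (formCoords q z).2.1 ^ 2
      = q.2.1 ^ 2 - 4 * q.1 * q.2.2 + (formCoords q z).2.2 ^ 2 := by
  simp only [formCoords, posProj, normSq_apply]
  field_simp
  ring

theorem formOfCoords_formCoords (hz : z.im ≠ 0) : formOfCoords z (formCoords q z) = q := by
  obtain ⟨a, b, c⟩ := q
  simp only [formOfCoords, formCoords, posProj, normSq_apply, Prod.mk.injEq]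
  refine ⟨?_, ?_, ?_⟩ <;> field_simp <;> ring

end

theorem continuousOn_formOfCoords :
    ContinuousOn (fun zp : ℂ × (ℝ × ℝ × ℝ) ↦ formOfCoords zp.1 zp.2)
      ({z : ℂ | z.im ≠ 0} ×ˢ Set.univ) := by
  unfold formOfCoords
  fun_prop (disch := simp_all)

theorem formCoords_mem_box {D C : ℝ} {q : ℝ × ℝ × ℝ} {z : ℂ} (hz : z.im ≠ 0)
    (hq : q.2.1 ^ 2 - 4 * q.1 * q.2.2 = D) (hC : |posProj q z| ≤ C) :
    formCoords q z ∈ Set.Icc (-√(D + C ^ 2)) √(D + C ^ 2) ×ˢ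
      Set.Icc (-√(D + C ^ 2)) √(D + C ^ 2) ×ˢ Set.Icc (-C) C := by
  have hw : (formCoords q z).2.2 ^ 2 ≤ C ^ 2 := sq_le_sq' (abs_le.mp hC).1 (abs_le.mp hC).2
  have hsum := formCoords_sq_add_sq (q := q) hz
  rw [hq] at hsum
  refine ⟨abs_le.mp (Real.abs_le_sqrt ?_), abs_le.mp (Real.abs_le_sqrt ?_), abs_le.mp hC⟩ <;>
    nlinarith [sq_nonneg (formCoords q z).1, sq_nonneg (formCoords q z).2.1]

theorem finite_of_intCast_mem_isCompact {S : Set (ℤ × ℤ × ℤ)} {T : Set (ℝ × ℝ × ℝ)}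
    (hT : IsCompact T) (hS : ∀ q ∈ S, ((q.1 : ℝ), (q.2.1 : ℝ), (q.2.2 : ℝ)) ∈ T) : S.Finite := by
  have hι : Topology.IsClosedEmbedding
      (Prod.map (Int.cast : ℤ → ℝ) (Prod.map (Int.cast : ℤ → ℝ) (Int.cast : ℤ → ℝ))) :=
    Int.isClosedEmbedding_coe_real.prodMap
      (Int.isClosedEmbedding_coe_real.prodMap Int.isClosedEmbedding_coe_real)
  exact (hι.isCompact_preimage hT).finite_of_discrete.subset hS

theorem finitely_many_forms_small_projection_general (D : ℤ)
    (C : ℝ) (K : Set ℂ) (hK : IsCompact K) (hKH : K ⊆ {z : ℂ | 0 < z.im}) :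
    {q : ℤ × ℤ × ℤ | q.2.1 ^ 2 - 4 * q.1 * q.2.2 = D ∧
      ∃ z ∈ K, |(q.1 : ℝ) * Complex.normSq z + q.2.1 * z.re + q.2.2| / z.im ≤ C}.Finite := by
  set r := √(D + C ^ 2)
  have hbox : IsCompact (Set.Icc (-r) r ×ˢ Set.Icc (-r) r ×ˢ Set.Icc (-C) C) :=
    isCompact_Icc.prod (isCompact_Icc.prod isCompact_Icc)
  have hK' : K ⊆ {z : ℂ | z.im ≠ 0} := fun z hz ↦ (hKH hz).ne'
  refine finite_of_intCast_mem_isCompact ((hK.prod hbox).image_of_continuousOn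
    (continuousOn_formOfCoords.mono (Set.prod_mono hK' (Set.subset_univ _)))) ?_
  rintro ⟨a, b, c⟩ ⟨hdisc, z, hzK, hsmall⟩
  have hz := hK' hzK
  refine ⟨(z, formCoords ((a : ℝ), (b : ℝ), (c : ℝ)) z), ⟨hzK, formCoords_mem_box hz ?_ ?_⟩,
    formOfCoords_formCoords hz⟩
  · dsimp only
    exact_mod_cast hdisc
  · rwa [posProj, abs_div, abs_of_pos (a := z.im) (hKH hzK)]

/-- For a non-square discriminant `D > 0`, a constant `C > 0` and a compact subset `K`
of the upper half-plane, only finitely many binary quadratic forms `[a,b,c]` of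
discriminant `D` satisfy `|a|z|² + bx + c|/y ≤ C` for some `z = x + iy ∈ K`. -/
theorem finitely_many_forms_small_projection (D : ℤ) (hD : 0 < D) (hns : ¬ IsSquare D)
    (C : ℝ) (hC : 0 < C) (K : Set ℂ) (hK : IsCompact K) (hKH : K ⊆ {z : ℂ | 0 < z.im}) :
    {q : ℤ × ℤ × ℤ | q.2.1 ^ 2 - 4 * q.1 * q.2.2 = D ∧
      ∃ z ∈ K, |(q.1 : ℝ) * Complex.normSq z + q.2.1 * z.re + q.2.2| / z.im ≤ C}.Finite :=
  finitely_many_forms_small_projection_general D C K hK hKH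
end
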